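/- Let K = {(x₁, x₂) ∈ ℝ² : 0 ≤ x₁ ≤ 1, 0 ≤ x₂ ≤ exp(−1/x₁) for x₁ > 0, and x₂ = 0 for x₁ = 0}. Then vol(K ∩ B_δ(0)) ≤ δ·exp(−1/δ) for all 0 < δ ≤ 1, and K does not satisfy Assumption 1: for every N ≥ 2 and every η > 0 and ε > 0 there exists 0 < δ ≤ ε with vol(K ∩ B_δ(0)) < η·δ^N·vol(B²). -/

import Mathlib

open MeasureTheory Set

noncomputable section

/-- The set `K = {x ∈ ℝ² : 0 ≤ x₁ ≤ 1, 0 ≤ x₂ ≤ exp(-1/x₁) (x₁ > 0), x₂ = 0 (x₁ = 0)}`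
of Example 2, with an exponential cusp at the origin. -/
def expCuspSet : Set (EuclideanSpace ℝ (Fin 2)) :=
  {x | 0 ≤ x 0 ∧ x 0 ≤ 1 ∧
    (x 0 = 0 → x 1 = 0) ∧
    (0 < x 0 → 0 ≤ x 1 ∧ x 1 ≤ Real.exp (-1 / x 0))}

lemma expCusp_abs_coord_le_norm (x : EuclideanSpace ℝ (Fin 2)) (i : Fin 2) : |x i| ≤ ‖x‖ := by
  rw [EuclideanSpace.norm_eq]
  have h : |x i| = Real.sqrt (‖x i‖ ^ 2) := by
    rw [Real.sqrt_sq_eq_abs]; simp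
  rw [h]
  apply Real.sqrt_le_sqrt
  exact Finset.single_le_sum (f := fun j => ‖x j‖ ^ 2) (fun j _ => by positivity) (Finset.mem_univ i)

lemma expCusp_volume_bound (δ : ℝ) (hδ : 0 < δ) (hδ1 : δ ≤ 1) :
    volume (expCuspSet ∩ Metric.closedBall (0 : EuclideanSpace ℝ (Fin 2)) δ)
      ≤ ENNReal.ofReal (δ * Real.exp (-1 / δ)) := by
  set s : Fin 2 → Set ℝ := fun i => Icc 0 (if i = 0 then δ else Real.exp (-1 / δ)) with hs
  have hsub : expCuspSet ∩ Metric.closedBall (0 : EuclideanSpace ℝ (Fin 2)) δ ⊆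
      (MeasurableEquiv.toLp 2 (Fin 2 → ℝ)).symm ⁻¹' (Set.pi univ s) := by
    rintro x ⟨⟨h0, h1, h2, h3⟩, hb⟩ i _
    have heq : ∀ j : Fin 2, (MeasurableEquiv.toLp 2 (Fin 2 → ℝ)).symm x j = x j := fun _ => rfl
    have hnorm : ‖x‖ ≤ δ := by
      rw [Metric.mem_closedBall, dist_zero_right] at hb; exact hb
    have hx0δ : x 0 ≤ δ :=
      le_trans (le_trans (le_abs_self _) (expCusp_abs_coord_le_norm x 0)) hnorm
    have hx1 : 0 ≤ x 1 ∧ x 1 ≤ Real.exp (-1 / δ) := by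
      rcases eq_or_lt_of_le h0 with h | h
      · have hz := h2 h.symm
        exact ⟨le_of_eq hz.symm, by rw [hz]; positivity⟩
      · obtain ⟨hy0, hy1⟩ := h3 h
        refine ⟨hy0, le_trans hy1 (Real.exp_le_exp.2 ?_)⟩
        rw [neg_div, neg_div, neg_le_neg_iff]
        exact one_div_le_one_div_of_le h hx0δ
    fin_cases i <;> rw [heq] <;> simp only [hs, Fin.isValue, mem_Icc, reduceIte]
    · exact ⟨h0, hx0δ⟩
    · exact hx1
  calc volume (expCuspSet ∩ Metric.closedBall (0 : EuclideanSpace ℝ (Fin 2)) δ)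
      ≤ volume ((MeasurableEquiv.toLp 2 (Fin 2 → ℝ)).symm ⁻¹' (Set.pi univ s)) :=
        measure_mono hsub
    _ = volume (Set.pi univ s) := by
        rw [(EuclideanSpace.volume_preserving_symm_measurableEquiv_toLp (Fin 2)).measure_preimage]
        exact (MeasurableSet.univ_pi fun i => measurableSet_Icc).nullMeasurableSet
    _ = ∏ i, volume (s i) := volume_pi_pi s
    _ = ENNReal.ofReal (δ * Real.exp (-1 / δ)) := by
        rw [Fin.prod_univ_two]
        have e0 : s 0 = Icc 0 δ := by simp [hs]
        have e1 : s 1 = Icc 0 (Real.exp (-1 / δ)) := by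
          simp only [hs]; rw [if_neg (by norm_num : (1 : Fin 2) ≠ 0)]
        rw [e0, e1, Real.volume_Icc, Real.volume_Icc, sub_zero, sub_zero,
          ← ENNReal.ofReal_mul hδ.le]

/-- Example 2: `vol(K ∩ B_δ(0)) ≤ δ·exp(-1/δ)` for `0 < δ ≤ 1`, and `K` does not
satisfy Assumption 1: for all `N ≥ 2`, `η > 0`, `ε > 0` there is `0 < δ ≤ ε` with
`vol(K ∩ B_δ(0)) < η·δ^N·vol(B²)`. -/
theorem expCuspSet_fails_assumption1 :
    (∀ δ : ℝ, 0 < δ → δ ≤ 1 →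
      volume (expCuspSet ∩ Metric.closedBall (0 : EuclideanSpace ℝ (Fin 2)) δ)
        ≤ ENNReal.ofReal (δ * Real.exp (-1 / δ))) ∧
    ∀ N : ℝ, 2 ≤ N → ∀ η > (0 : ℝ), ∀ ε > (0 : ℝ), ∃ δ : ℝ, 0 < δ ∧ δ ≤ ε ∧
      volume (expCuspSet ∩ Metric.closedBall (0 : EuclideanSpace ℝ (Fin 2)) δ)
        < ENNReal.ofReal (η * δ ^ N) *
            volume (Metric.ball (0 : EuclideanSpace ℝ (Fin 2)) 1) := by
  constructor
  · exact expCusp_volume_bound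
  · intro N hN η hη ε hε
    set V := volume (Metric.ball (0 : EuclideanSpace ℝ (Fin 2)) 1) with hV
    have hVpos : 0 < V := Metric.measure_ball_pos _ _ one_pos
    have hVfin : V ≠ ⊤ := (measure_ball_lt_top).ne
    set c := V.toReal with hc
    have hcpos : 0 < c := ENNReal.toReal_pos hVpos.ne' hVfin
    have hlim := tendsto_exp_div_rpow_atTop (N - 1)
    have hev : ∀ᶠ t in Filter.atTop, (1 : ℝ) / (η * c) < Real.exp t / t ^ (N - 1) :=
      hlim.eventually_gt_atTop _
    obtain ⟨t₀, ht₀⟩ :=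
      (hev.and (Filter.eventually_ge_atTop (max (1 / ε) 1))).exists_forall_of_atTop
    set t : ℝ := max t₀ (max (1 / ε) 1) with ht
    obtain ⟨hratio, htbig⟩ := ht₀ t (le_max_left _ _)
    have ht1 : (1 : ℝ) ≤ t := le_trans (le_max_right _ _) (le_max_right _ _)
    have htε : 1 / ε ≤ t := le_trans (le_max_left _ _) (le_max_right _ _)
    have htpos : 0 < t := lt_of_lt_of_le one_pos ht1
    refine ⟨1 / t, by positivity, ?_, ?_⟩
    · rw [div_le_iff₀ htpos]
      calc (1 : ℝ) = ε * (1 / ε) := by field_simp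
        _ ≤ ε * t := by exact mul_le_mul_of_nonneg_left htε hε.le
    set δ : ℝ := 1 / t with hδdef
    have hδpos : 0 < δ := by positivity
    have hδ1 : δ ≤ 1 := by
      rw [hδdef, div_le_one htpos]; exact ht1
    have htpow : 0 < t ^ (N - 1) := Real.rpow_pos_of_pos htpos _
    -- key real inequality
    have key : t ^ (N - 1) < η * c * Real.exp t := by
      rw [div_lt_div_iff₀ (by positivity) htpow] at hratio
      nlinarith
    have hfinal : Real.exp (-t) < η * (t ^ (N - 1))⁻¹ * c := by
      rw [Real.exp_neg]
      have hrw : η * (t ^ (N - 1))⁻¹ * c = (η * c) / t ^ (N - 1) := by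
        field_simp
      rw [hrw, lt_div_iff₀ htpow]
      have hexp := Real.exp_pos t
      have hcancel : (Real.exp t)⁻¹ * Real.exp t = 1 := inv_mul_cancel₀ hexp.ne'
      nlinarith [inv_pos.2 hexp]
    have hneg : -1 / δ = -t := by
      rw [hδdef]; field_simp
    have hsplit : δ ^ N = δ * δ ^ (N - 1) := by
      have h1 : δ ^ N = δ ^ (1 + (N - 1)) := by ring_nf
      rw [h1, Real.rpow_add hδpos, Real.rpow_one]
    have hδpow : δ ^ (N - 1) = (t ^ (N - 1))⁻¹ := by
      rw [hδdef, one_div, Real.inv_rpow htpos.le]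
    have hreal : δ * Real.exp (-1 / δ) < η * δ ^ N * c := by
      rw [hneg, hsplit, hδpow]
      calc δ * Real.exp (-t) < δ * (η * (t ^ (N - 1))⁻¹ * c) :=
            mul_lt_mul_of_pos_left hfinal hδpos
        _ = η * (δ * (t ^ (N - 1))⁻¹) * c := by ring
    calc volume (expCuspSet ∩ Metric.closedBall (0 : EuclideanSpace ℝ (Fin 2)) δ)
        ≤ ENNReal.ofReal (δ * Real.exp (-1 / δ)) := expCusp_volume_bound δ hδpos hδ1
      _ < ENNReal.ofReal (η * δ ^ N * c) := by
          rw [ENNReal.ofReal_lt_ofReal_iff (by positivity)]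
          exact hreal
      _ = ENNReal.ofReal (η * δ ^ N) * V := by
          rw [ENNReal.ofReal_mul (by positivity), hc, ENNReal.ofReal_toReal hVfin]
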